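/- arXiv:2410.18999 — 3 statements merged into one kernel-verified Lean document; each statement's English description precedes it below -/
import Mathlib

section
/- Let a ≥ b > 0 be integers and let d = ⟨d₁,…,dₙ⟩ be a nonincreasing sequence of integers with a ≥ d₁ and dₙ ≥ b. If Σdᵢ is even and n ≥ (a+b+1)²/(4b), then d is graphic. -/
/-!
By the Erdős–Gallai theorem it suffices that `∑_{i<k} dᵢ ≤ k(k-1) + ∑_{i≥k} min(dᵢ, k)` for all
`k ≤ n`. Bounding the left side by `k a` and each `min(dᵢ, k)` below by `min(b, k)`, this reduces
to `k a ≤ k(k-1) + (n-k) min(b, k)`. For `k ≥ b` this is the nonnegativity of the quadratic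
`k² - (a+b+1) k + b n`, whose discriminant `(a+b+1)² - 4bn` is `≤ 0`; for `k ≤ b` it follows from
`n ≥ a + 1`, which the same hypothesis implies.

The Erdős–Gallai theorem is proved as by Choudum, by induction on the degree sum: lower by one the
last positive entry `q` and the last entry `p < q` of the block of maximal entries. The
inequalities survive (the tight cases are settled by the inequality at `p + 1` and by parity), so
the lowered sequence is realized by a graph, to which one adds the edge `pq` directly or, when it is
already present, through a two-switch.
-/

def IsGraphicSeq {n : ℕ} (d : Fin n → ℕ) : Prop :=
  ∃ (G : SimpleGraph (Fin n)) (_ : DecidableRel G.Adj), ∀ i, G.degree i = d i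

open Finset

namespace SimpleGraph
variable {V : Type*} [Fintype V] [DecidableEq V] {G H : SimpleGraph V} [DecidableRel G.Adj]
  [DecidableRel H.Adj]

lemma degree_sup_of_disjoint (h : Disjoint G H) (v : V) :
    (G ⊔ H).degree v = G.degree v + H.degree v := by
  simp only [← card_neighborFinset_eq_degree, neighborFinset_sup]
  exact card_union_of_disjoint (disjoint_neighborFinset_of_disjoint G H v h)

lemma degree_edge {p q : V} (hpq : p ≠ q) (v : V) :
    (edge p q).degree v = if v = p ∨ v = q then 1 else 0 := by
  rw [← card_neighborFinset_eq_degree]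
  split_ifs with hv
  · refine card_eq_one.2 ⟨if v = p then q else p, ?_⟩
    ext w
    simp only [mem_neighborFinset, edge_adj, mem_singleton]
    grind
  · refine card_eq_zero.2 (eq_empty_of_forall_notMem fun w => ?_)
    simp only [mem_neighborFinset, edge_adj]
    grind

lemma degree_sup_edge {p q : V} (hpq : p ≠ q) (hn : ¬G.Adj p q) (v : V) :
    (G ⊔ edge p q).degree v = G.degree v + if v = p ∨ v = q then 1 else 0 := by
  rw [degree_sup_of_disjoint (G.disjoint_edge.2 hn), degree_edge hpq]

/-- The two-switch replacing the edge `uw` by the edges `pw` and `qu`. -/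
lemma exists_degree_add_pair_of_switch {p q u w : V} (hpq : p ≠ q) (hpw : p ≠ w) (hqu : q ≠ u)
    (huw : G.Adj u w) (hnpw : ¬G.Adj p w) (hnqu : ¬G.Adj q u) :
    ∃ (H : SimpleGraph V) (_ : DecidableRel H.Adj),
      ∀ v, H.degree v = G.degree v + if v = p ∨ v = q then 1 else 0 := by
  set G₀ := G \ edge u w
  have hG : G₀ ⊔ edge u w = G := sdiff_sup_cancel (G.edge_le_iff.2 (.inr huw))
  have hG₀ : ∀ v, G.degree v = G₀.degree v + if v = u ∨ v = w then 1 else 0 := by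
    intro v
    have hn : ¬G₀.Adj u w := fun h => h.2 (by simp [edge_adj, huw.ne])
    convert degree_sup_edge huw.ne hn v using 2
    exact hG.symm
  have hnpw₀ : ¬G₀.Adj p w := fun h => hnpw h.1
  have hnqu₁ : ¬(G₀ ⊔ edge p w).Adj q u := by
    rintro (h | h)
    · exact hnqu h.1
    · rw [edge_adj] at h
      rcases h with ⟨⟨rfl, rfl⟩ | ⟨rfl, rfl⟩, -⟩
      · exact hpq rfl
      · exact hnpw huw
  refine ⟨G₀ ⊔ edge p w ⊔ edge q u, inferInstance, fun v => ?_⟩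
  rw [degree_sup_edge hqu hnqu₁, degree_sup_edge hpw hnpw₀, hG₀]
  have := huw.ne
  grind

lemma exists_degree_add_pair {p q : V} (hpq : p ≠ q)
    (hsw : G.Adj p q → ∃ w, w ≠ p ∧ ¬G.Adj p w ∧ G.degree q < G.degree w) :
    ∃ (H : SimpleGraph V) (_ : DecidableRel H.Adj),
      ∀ v, H.degree v = G.degree v + if v = p ∨ v = q then 1 else 0 := by
  by_cases hadj : ¬G.Adj p q
  · exact ⟨G ⊔ edge p q, inferInstance, degree_sup_edge hpq hadj⟩
  rw [not_not] at hadj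
  obtain ⟨w, hwp, hnpw, hdeg⟩ := hsw hadj
  obtain ⟨u, hwu, hnqu, huq⟩ : ∃ u, G.Adj w u ∧ ¬G.Adj q u ∧ u ≠ q := by
    by_contra! hc
    -- `p ∈ N(q) \ N(w)`, so `N(w) ⊆ {q} ∪ N(q) \ {p}` would force `deg w ≤ deg q`
    have hsub : G.neighborFinset w ⊆ insert q ((G.neighborFinset q).erase p) := by
      intro x hx
      rw [mem_neighborFinset] at hx
      by_cases hqx : G.Adj q x
      · exact mem_insert_of_mem (mem_erase.2 ⟨by rintro rfl; exact hnpw hx.symm, by simpa⟩)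
      · simp [hc x hx hqx]
    have := (card_le_card hsub).trans (card_insert_le _ _)
    rw [card_erase_of_mem (by simpa using hadj.symm)] at this
    simp only [card_neighborFinset_eq_degree] at this
    have := (G.degree_pos_iff_exists_adj q).2 ⟨p, hadj.symm⟩
    omega
  exact exists_degree_add_pair_of_switch hpq hwp.symm huq.symm hwu.symm hnpw hnqu

lemma exists_ne_not_adj_of_degree_lt {p q : V} {s : Finset V} (hp : p ∈ s) (hq : q ∉ s)
    (hadj : G.Adj p q) (hdeg : G.degree p < #s) : ∃ w ∈ s, w ≠ p ∧ ¬G.Adj p w := by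
  by_contra! hc
  have hsub : insert q (s.erase p) ⊆ G.neighborFinset p := by
    intro x hx
    rcases mem_insert.1 hx with rfl | hx
    · simpa
    · simpa using hc x (mem_of_mem_erase hx) (ne_of_mem_erase hx)
  have := card_le_card hsub
  rw [card_insert_of_notMem (fun h => hq (mem_of_mem_erase h)), card_erase_of_mem hp] at this
  simp only [card_neighborFinset_eq_degree] at this
  omega

end SimpleGraph

def ErdosGallai (d : ℕ → ℕ) (n : ℕ) : Prop :=
  ∀ k ≤ n, ∑ i ∈ range k, d i ≤ k * (k - 1) + ∑ i ∈ Ico k n, min (d i) k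

def lowerPair (d : ℕ → ℕ) (p q : ℕ) (i : ℕ) : ℕ := d i - if i = p ∨ i = q then 1 else 0

lemma sum_ite_eq_or {ι M : Type*} [DecidableEq ι] [AddCommMonoid M] {s : Finset ι} {p q : ι}
    (hpq : p ≠ q) (f : ι → M) :
    ∑ i ∈ s, (if i = p ∨ i = q then f i else 0) =
      (if p ∈ s then f p else 0) + (if q ∈ s then f q else 0) := by
  rw [← sum_ite_eq' s p, ← sum_ite_eq' s q, ← sum_add_distrib]
  refine sum_congr rfl fun i _ => ?_
  by_cases hp : i = p <;> by_cases hq : i = q <;> simp_all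

section
variable {d : ℕ → ℕ} {n p q : ℕ}

lemma lowerPair_add (hp : 1 ≤ d p) (hq : 1 ≤ d q) (i : ℕ) :
    lowerPair d p q i + (if i = p ∨ i = q then 1 else 0) = d i := by
  unfold lowerPair
  split_ifs with h
  · rcases h with rfl | rfl <;> omega
  · rfl

lemma antitone_lowerPair (hd : Antitone d) (hpq : p < q)
    (hgap : ∀ i, p < i → i < q → d i < d p) (htail : ∀ i, q < i → d i = 0) :
    Antitone (lowerPair d p q) := by
  intro i j hij
  have hdij := hd hij
  have hdpq := hd hpq.le
  unfold lowerPair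
  rcases hij.eq_or_lt with rfl | hij
  · rfl
  have := hgap j
  have := htail j
  have hip : i = p → d i = d p := fun h => h ▸ rfl
  have hjq : j = q → d j = d q := fun h => h ▸ rfl
  split_ifs <;> omega

lemma sum_range_lowerPair (hpq : p < q) (hqn : q < n) (hp : 1 ≤ d p) (hq : 1 ≤ d q) :
    ∑ i ∈ range n, lowerPair d p q i + 2 = ∑ i ∈ range n, d i := by
  simp_rw [← lowerPair_add hp hq]
  rw [sum_add_distrib, sum_ite_eq_or hpq.ne (fun _ => 1)]
  simp [hqn, hpq.trans hqn]

lemma ErdosGallai.head_le (heg : ErdosGallai d n) (hn : 1 ≤ n) (htail : ∀ i, q < i → d i = 0) :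
    d 0 ≤ q := by
  have h1 := heg 1 hn
  simp only [range_one, sum_singleton, tsub_self, mul_zero, zero_add] at h1
  calc d 0 ≤ ∑ i ∈ Ico 1 n, min (d i) 1 := h1
    _ ≤ ∑ i ∈ Ico 1 n, if i ≤ q then 1 else 0 := by
      refine sum_le_sum fun i _ => ?_
      split_ifs with h
      · exact min_le_right _ _
      · simp [htail i (by omega)]
    _ = #{i ∈ Ico 1 n | i ≤ q} := sum_boole _ _
    _ ≤ #(Icc 1 q) := card_le_card fun i => by simp only [mem_filter, mem_Ico, mem_Icc]; omega
    _ = q := by simp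

variable {k : ℕ}

lemma sum_range_of_top (htop : ∀ i ≤ p, d i = d 0) (hk : k ≤ p + 1) :
    ∑ i ∈ range k, d i = k * d 0 := by
  rw [sum_congr rfl fun i hi => htop i (by rw [mem_range] at hi; omega)]
  simp

lemma ErdosGallai.lt_of_top (heg : ErdosGallai d n) (hpq : p < q) (hqn : q < n)
    (htop : ∀ i ≤ p, d i = d 0) (hq : 1 ≤ d q) (hkp : k ≤ p) (hqk : d q ≤ k) (hk0 : k ≤ d 0) :
    k * d 0 < k * (k - 1) + ∑ i ∈ Ico k n, min (d i) k := by
  set m := p + 1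
  set T := ∑ i ∈ Ico m n, min (d i) k
  set U := ∑ i ∈ Ico m n, min (d i) m
  have hU : m * d 0 ≤ m * p + U := by
    simpa [sum_range_of_top htop le_rfl, m] using heg m (by omega)
  -- weighting the tail by `k` instead of `m` loses strictly at `q`, where `d q ≤ k < m`
  have hUT : k * U < m * T := by
    rw [mul_sum, mul_sum]
    refine sum_lt_sum (fun i _ => ?_) ⟨q, mem_Ico.2 ⟨by omega, hqn⟩, ?_⟩
    · rcases le_total (d i) k with h | h
      · rw [min_eq_left h, min_eq_left (by omega)]
        exact Nat.mul_le_mul_right _ (by omega)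
      · rw [min_eq_right h, mul_comm]
        exact Nat.mul_le_mul_right _ (min_le_right _ _)
    · rw [min_eq_left (by omega), min_eq_left hqk]
      exact Nat.mul_lt_mul_of_pos_right (by omega) (by omega)
  have hhead : ∑ i ∈ Ico k n, min (d i) k = (m - k) * k + T := by
    rw [← sum_Ico_consecutive _ (by omega : k ≤ m) (by omega : m ≤ n)]
    rw [sum_congr rfl fun i hi => by rw [htop i (by rw [mem_Ico] at hi; omega), min_eq_right hk0],
      sum_const, Nat.card_Ico, smul_eq_mul]
  have hkT : k * d 0 < k * p + T := by
    refine Nat.lt_of_mul_lt_mul_left (a := m) ?_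
    calc m * (k * d 0) = k * (m * d 0) := by ring
      _ ≤ k * (m * p + U) := Nat.mul_le_mul_left _ hU
      _ = m * (k * p) + k * U := by ring
      _ < m * (k * p) + m * T := by omega
      _ = m * (k * p + T) := by ring
  have hk : k * (k - 1) + (m - k) * k = k * p := by
    simp only [m]
    zify [(by omega : 1 ≤ k), (by omega : k ≤ p + 1)]
    ring
  omega

lemma add_two_le_of_top (hd : Antitone d) (heven : Even (∑ i ∈ range n, d i)) (hpq : p < q)
    (hqn : q < n) (htop : ∀ i ≤ p, d i = d 0) (hq : 1 ≤ d q) (hkp : k ≤ p) (h0k : d 0 ≤ k) :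
    k * d 0 + 2 ≤ k * (k - 1) + ∑ i ∈ Ico k n, min (d i) k := by
  rw [sum_congr rfl fun i _ => min_eq_left ((hd (Nat.zero_le i)).trans h0k)]
  set S := ∑ i ∈ Ico k n, d i
  have hS : d 0 + d q ≤ S := by
    rw [← htop p le_rfl]
    exact add_le_sum (fun i _ => Nat.zero_le _) (mem_Ico.2 ⟨hkp, by omega⟩)
      (mem_Ico.2 ⟨by omega, hqn⟩) hpq.ne
  have hq0 : d q ≤ d 0 := hd (Nat.zero_le q)
  rcases h0k.lt_or_eq with hlt | rfl
  · have : k * d 0 ≤ k * (k - 1) := Nat.mul_le_mul_left _ (by omega)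
    omega
  -- when `k = d 0`, the total `d 0 * d 0 + S` is even, so `S ≠ d 0 + 1`
  · have htotal : d 0 * d 0 + S = ∑ i ∈ range n, d i := by
      rw [← sum_range_add_sum_Ico _ (by omega : d 0 ≤ n), sum_range_of_top htop (by omega)]
    have hS2 : S ≠ d 0 + 1 := by
      intro h
      rw [h, ← add_assoc, ← mul_add_one] at htotal
      exact Nat.not_even_iff_odd.2 (htotal ▸ (Nat.even_mul_succ_self _).add_one) heven
    have := Nat.mul_sub_one (d 0) (d 0)
    have := Nat.le_mul_self (d 0)
    omega

lemma erdosGallai_lowerPair (hd : Antitone d) (heven : Even (∑ i ∈ range n, d i))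
    (heg : ErdosGallai d n) (hpq : p < q) (hqn : q < n) (htop : ∀ i ≤ p, d i = d 0)
    (hq : 1 ≤ d q) : ErdosGallai (lowerPair d p q) n := by
  intro k hk
  have hp : 1 ≤ d p := hq.trans (hd hpq.le)
  have hL : ∑ i ∈ range k, d i = ∑ i ∈ range k, lowerPair d p q i +
      ((if p ∈ range k then 1 else 0) + (if q ∈ range k then 1 else 0)) := by
    simp_rw [← lowerPair_add hp hq]
    rw [sum_add_distrib, sum_ite_eq_or hpq.ne (fun _ => 1)]
  have hR : ∑ i ∈ Ico k n, min (d i) k ≤ ∑ i ∈ Ico k n, min (lowerPair d p q i) k +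
      ((if p ∈ Ico k n then (if d p ≤ k then 1 else 0) else 0) +
        (if q ∈ Ico k n then (if d q ≤ k then 1 else 0) else 0)) := by
    rw [← sum_ite_eq_or hpq.ne (fun i => if d i ≤ k then 1 else 0), ← sum_add_distrib]
    refine sum_le_sum fun i _ => ?_
    rw [← lowerPair_add hp hq i]
    split_ifs <;> omega
  have hegk := heg k hk
  rcases lt_or_ge p k with hpk | hkp
  · simp only [mem_range, mem_Ico] at hL hR
    split_ifs at hL hR <;> omega
  have hp0 : d p = d 0 := htop p le_rfl
  have hq0 : d q ≤ d 0 := hd (Nat.zero_le q)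
  have hLk : ∑ i ∈ range k, d i = k * d 0 := sum_range_of_top htop (by omega)
  simp only [mem_range, mem_Ico, show ¬p < k by omega, show ¬q < k by omega, if_false,
    show k ≤ p ∧ p < n by omega, show k ≤ q ∧ q < n by omega, hp0] at hL hR
  rcases lt_or_ge k (d q) with hkq | hqk
  · split_ifs at hR <;> omega
  rcases lt_or_ge k (d 0) with hk0 | h0k
  · have := heg.lt_of_top hpq hqn htop hq hkp hqk hk0.le
    split_ifs at hR <;> omega
  · have := add_two_le_of_top hd heven hpq hqn htop hq hkp h0k
    split_ifs at hR <;> omega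

lemma ErdosGallai.exists_lowering_pair (hd : Antitone d) (hz : ∀ i, n ≤ i → d i = 0)
    (heg : ErdosGallai d n) (h0 : 0 < d 0) :
    ∃ p q, p < q ∧ q < n ∧ d 0 ≤ q ∧ 0 < d q ∧ (∀ i ≤ p, d i = d 0) ∧
      (∀ i, p < i → i < q → d i < d p) ∧ ∀ i, q < i → d i = 0 := by
  set q := Nat.findGreatest (fun i => 0 < d i) n
  have hq : 0 < d q := Nat.findGreatest_spec (P := fun i => 0 < d i) (Nat.zero_le n) h0
  have htail : ∀ i, q < i → d i = 0 := fun i hqi => by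
    by_cases hin : i ≤ n
    · simpa using Nat.findGreatest_is_greatest hqi hin
    · exact hz i (by omega)
  have hqn : q < n := by
    by_contra h
    exact hq.ne' (hz q (by omega))
  have h0q : d 0 ≤ q := heg.head_le (by omega) htail
  set p := Nat.findGreatest (fun i => d i = d 0) (q - 1)
  have hp0 : d p = d 0 :=
    Nat.findGreatest_spec (P := fun i => d i = d 0) (Nat.zero_le _) rfl
  refine ⟨p, q, (Nat.findGreatest_le _).trans_lt (by omega), hqn, h0q, hq,
    fun i hi => (hd (Nat.zero_le i)).antisymm (hp0 ▸ hd hi), fun i hpi hiq => ?_, htail⟩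
  exact hp0 ▸ (hd (Nat.zero_le i)).lt_of_ne
    (Nat.findGreatest_is_greatest (P := fun i => d i = d 0) hpi (by omega))

lemma IsGraphicSeq.of_lowerPair (hd : Antitone d) (hpq : p < q) (hqn : q < n) (hpd : d p ≤ q)
    (hq : 0 < d q) (hG : IsGraphicSeq fun v : Fin n => lowerPair d p q v) :
    IsGraphicSeq fun v : Fin n => d v := by
  obtain ⟨G, _, hG⟩ := hG
  have hp : 1 ≤ d p := hq.trans_le (hd hpq.le)
  set pf : Fin n := ⟨p, hpq.trans hqn⟩
  set qf : Fin n := ⟨q, hqn⟩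
  obtain ⟨H, _, hH⟩ := G.exists_degree_add_pair (p := pf) (q := qf) (by simp [pf, qf, hpq.ne])
    fun hadj => by
      have hdeg : G.degree pf < #(Iio qf) := by
        simp only [hG, lowerPair, true_or, if_true, Fin.card_Iio, pf, qf]
        omega
      obtain ⟨w, hw, hwp, hnpw⟩ := G.exists_ne_not_adj_of_degree_lt
        (by simpa [pf, qf] using hpq) (by simp) hadj hdeg
      refine ⟨w, hwp, hnpw, ?_⟩
      have hwq : w.val < q := by simpa [qf, Fin.lt_def] using hw
      have hwp' : w.val ≠ p := fun h => hwp (Fin.ext h)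
      have := hd hwq.le
      simp only [hG, lowerPair, hwp', hwq.ne, or_true, or_self, if_true, if_false, qf]
      omega
  refine ⟨H, ‹_›, fun v => ?_⟩
  rw [hH, hG]
  simpa [pf, qf, Fin.ext_iff] using lowerPair_add hp hq v

end

theorem isGraphicSeq_of_erdosGallai {n : ℕ} (d : ℕ → ℕ) (hd : Antitone d)
    (hz : ∀ i, n ≤ i → d i = 0) (heven : Even (∑ i ∈ range n, d i)) (heg : ErdosGallai d n) :
    IsGraphicSeq fun v : Fin n => d v := by
  induction hN : ∑ i ∈ range n, d i using Nat.strong_induction_on generalizing d with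
  | _ N ih =>
    rcases Nat.eq_zero_or_pos (d 0) with h0 | h0
    · exact ⟨⊥, inferInstance, fun v => by simpa [h0] using (hd (Nat.zero_le v.val)).antisymm'⟩
    obtain ⟨p, q, hpq, hqn, h0q, hq, htop, hgap, htail⟩ := heg.exists_lowering_pair hd hz h0
    have hsum := sum_range_lowerPair hpq hqn (hq.trans_le (hd hpq.le)) hq
    refine IsGraphicSeq.of_lowerPair hd hpq hqn (htop p le_rfl ▸ h0q) hq ?_
    exact ih (N - 2) (by omega) _ (antitone_lowerPair hd hpq hgap htail)
      (fun i hi => by simp [lowerPair, hz i hi]) ((Nat.even_add.1 (hsum ▸ heven)).2 even_two)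
      (erdosGallai_lowerPair hd heven heg hpq hqn htop hq) (by omega)

lemma mul_le_of_sq_le_four_mul {a b n k : ℕ} (hk : k ≤ n) (hn : (a + b + 1) ^ 2 ≤ 4 * b * n) :
    k * a ≤ k * (k - 1) + (n - k) * min b k := by
  have ha : a + 1 ≤ n := by
    by_contra! h
    have := Nat.mul_le_mul_left (4 * b) (show n ≤ a by omega)
    have := four_mul_le_sq_add (a + 1) b
    nlinarith
  rcases Nat.eq_zero_or_pos k with rfl | hk1
  · simp
  rcases le_total k b with hkb | hbk
  · rw [min_eq_right hkb]
    zify [hk, hk1]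
    nlinarith
  · rw [min_eq_left hbk]
    zify [hk, hk1]
    nlinarith [sq_nonneg (2 * (k : ℤ) - (a + b + 1))]

lemma erdosGallai_of_bounds {d : ℕ → ℕ} {a b n : ℕ} (hub : ∀ i < n, d i ≤ a)
    (hlb : ∀ i < n, b ≤ d i) (hn : (a + b + 1) ^ 2 ≤ 4 * b * n) : ErdosGallai d n := by
  intro k hk
  have hL : ∑ i ∈ range k, d i ≤ k * a := by
    simpa using sum_le_card_nsmul (range k) d a fun i hi => hub i ((mem_range.1 hi).trans_le hk)
  have hR : (n - k) * min b k ≤ ∑ i ∈ Ico k n, min (d i) k := by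
    simpa using card_nsmul_le_sum (Ico k n) (fun i => min (d i) k) (min b k)
      fun i hi => min_le_min_right k (hlb i (mem_Ico.1 hi).2)
  have := mul_le_of_sq_le_four_mul hk hn
  omega

theorem zverovich_zverovich_general {a b n : ℕ}
    (d : Fin n → ℕ) (hmono : ∀ i j : Fin n, i ≤ j → d j ≤ d i)
    (hub : ∀ i, d i ≤ a) (hlb : ∀ i, b ≤ d i)
    (heven : Even (∑ i, d i)) (hn : (a + b + 1) ^ 2 ≤ 4 * b * n) :
    IsGraphicSeq d := by
  set e : ℕ → ℕ := fun i => if h : i < n then d ⟨i, h⟩ else 0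
  have he : ∀ v : Fin n, e v = d v := fun v => dif_pos v.isLt
  have hanti : Antitone e := fun i j hij => by
    by_cases hj : j < n
    · simpa [e, hj, hij.trans_lt hj] using hmono ⟨i, hij.trans_lt hj⟩ ⟨j, hj⟩ hij
    · simp [e, hj]
  have hsum : ∑ i ∈ range n, e i = ∑ i, d i := by
    rw [← Fin.sum_univ_eq_sum_range]
    simp only [he]
  simpa [he] using isGraphicSeq_of_erdosGallai e hanti (fun i hi => dif_neg (by omega))
    (hsum ▸ heven) (erdosGallai_of_bounds (fun i hi => he ⟨i, hi⟩ ▸ hub _)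
      (fun i hi => he ⟨i, hi⟩ ▸ hlb _) hn)

/-- Zverovich–Zverovich: a nonincreasing sequence bounded above by `a` and below by
`b > 0`, with even sum and length `n ≥ (a+b+1)²/(4b)` (stated as `(a+b+1)² ≤ 4bn`),
is graphic. -/
theorem zverovich_zverovich {a b n : ℕ} (hb : 0 < b) (hba : b ≤ a)
    (d : Fin n → ℕ) (hmono : ∀ i j : Fin n, i ≤ j → d j ≤ d i)
    (hub : ∀ i, d i ≤ a) (hlb : ∀ i, b ≤ d i)
    (heven : Even (∑ i, d i)) (hn : (a + b + 1) ^ 2 ≤ 4 * b * n) :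
    IsGraphicSeq d :=
  zverovich_zverovich_general d hmono hub hlb heven hn
end

section
/- For n ≥ 7 and any integer x with 4 ≤ x ≤ n-3 such that (n-4)·x is even, the sequence d - 2 = (n-3, n-3, x-2, x-2, …, x-2) of length n-2 (with n-4 copies of x-2) is graphic. -/
/-!
The sequence is realised by the join of an edge with an `(x - 4)`-regular graph on `n - 4`
vertices, i.e. by the complement of two isolated vertices beside the complement of that regular
graph. A `2j`-regular graph on `m > 2j` vertices is the circulant graph on `ZMod m` with jumps
`±1, …, ±j`; an odd degree `d` forces `m` even, and then the complement of an
`(m - 1 - d)`-regular circulant graph works.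
-/

/-- A finite list of naturals is graphic if it is realized as the degree sequence of a
simple graph. -/
def IsGraphicList (l : List ℕ) : Prop :=
  ∃ (G : SimpleGraph (Fin l.length)) (_ : DecidableRel G.Adj), ∀ i, G.degree i = l.get i

open Finset Pointwise

namespace ZMod

theorem natCast_ne_zero_of_pos_of_lt {m c : ℕ} (hc : 0 < c) (hcm : c < m) : (c : ZMod m) ≠ 0 :=
  fun h => absurd (Nat.le_of_dvd hc ((natCast_eq_zero_iff c m).mp h)) (by omega)

theorem exists_finset_neg_eq_self_zero_notMem_card_eq {m j : ℕ} (hj : 2 * j < m) :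
    ∃ s : Finset (ZMod m), -s = s ∧ 0 ∉ s ∧ #s = 2 * j := by
  set A : Finset (ZMod m) := (Icc 1 j).image Nat.cast
  have hA0 : (0 : ZMod m) ∉ A := by
    simp only [A, mem_image, mem_Icc, not_exists, not_and]
    exact fun c hc => natCast_ne_zero_of_pos_of_lt (by omega) (by omega)
  have hinj : Set.InjOn (Nat.cast : ℕ → ZMod m) (Icc 1 j) := by
    intro a ha b hb hab
    simp only [coe_Icc, Set.mem_Icc] at ha hb
    rwa [natCast_eq_natCast_iff', Nat.mod_eq_of_lt (by omega), Nat.mod_eq_of_lt (by omega)] at hab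
  have hdisj : Disjoint A (-A) := by
    simp only [A, disjoint_left, mem_neg', mem_image, mem_Icc, not_exists, not_and]
    rintro _ ⟨a, ha, rfl⟩ b hb hab
    refine natCast_ne_zero_of_pos_of_lt (c := a + b) (m := m) (by omega) (by omega) ?_
    rw [Nat.cast_add, hab, add_neg_cancel]
  refine ⟨A ∪ -A, by ext; simp only [mem_neg', mem_union, neg_neg, or_comm], ?_, ?_⟩
  · rw [mem_union, mem_neg', neg_zero, or_self]
    exact hA0
  · rw [card_union_of_disjoint hdisj, card_neg, card_image_of_injOn hinj, Nat.card_Icc]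
    omega

end ZMod

namespace SimpleGraph

variable {V W : Type*}

section Sum

variable (G : SimpleGraph V) (H : SimpleGraph W)

theorem degree_sum_inl (v : V) [Fintype ((G ⊕g H).neighborSet (.inl v))]
    [Fintype (G.neighborSet v)] : (G ⊕g H).degree (.inl v) = G.degree v := by
  simp only [← card_neighborSet_eq_degree]
  exact Fintype.card_congr <|
    (Equiv.setCongr (neighborSet_sum_inl v)).trans (Equiv.Set.image _ _ Sum.inl_injective).symm

theorem degree_sum_inr (w : W) [Fintype ((G ⊕g H).neighborSet (.inr w))]
    [Fintype (H.neighborSet w)] : (G ⊕g H).degree (.inr w) = H.degree w := by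
  simp only [← card_neighborSet_eq_degree]
  exact Fintype.card_congr <|
    (Equiv.setCongr (neighborSet_sum_inr w)).trans (Equiv.Set.image _ _ Sum.inr_injective).symm

end Sum

theorem circulantGraph_degree {G : Type*} [AddGroup G] [Fintype G] [DecidableEq G]
    {s : Finset G} (hs : -s = s) (h0 : 0 ∉ s) (v : G) :
    (circulantGraph (s : Set G)).degree v = #s := by
  suffices (circulantGraph (s : Set G)).neighborFinset v = s.map (addRightEmbedding v) by
    rw [← card_neighborFinset_eq_degree, this, card_map]
  ext w
  have hsymm : v - w ∈ s ↔ w - v ∈ s := by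
    rw [← neg_sub, ← mem_neg', hs]
  simp only [mem_neighborFinset, circulantGraph_adj, mem_coe, hsymm, or_self, mem_map,
    addRightEmbedding_apply]
  constructor
  · rintro ⟨-, h⟩
    exact ⟨w - v, h, sub_add_cancel w v⟩
  · rintro ⟨a, ha, rfl⟩
    exact ⟨fun h => h0 (right_eq_add.mp h ▸ ha), by simpa using ha⟩

theorem exists_isRegularOfDegree_two_mul {m j : ℕ} [NeZero m] (hj : 2 * j < m) :
    ∃ (G : SimpleGraph (ZMod m)) (_ : DecidableRel G.Adj), G.IsRegularOfDegree (2 * j) := by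
  obtain ⟨s, hs, h0, hcard⟩ := ZMod.exists_finset_neg_eq_self_zero_notMem_card_eq hj
  exact ⟨circulantGraph s, inferInstance, fun v => by rw [circulantGraph_degree hs h0, hcard]⟩

theorem exists_isRegularOfDegree {m d : ℕ} [NeZero m] (hd : d < m) (hpar : Even (m * d)) :
    ∃ (G : SimpleGraph (ZMod m)) (_ : DecidableRel G.Adj), G.IsRegularOfDegree d := by
  rcases Nat.even_or_odd d with ⟨j, rfl⟩ | hodd
  · simpa only [two_mul] using exists_isRegularOfDegree_two_mul (j := j) (by omega)
  · have hm : Even m := (Nat.even_mul.mp hpar).resolve_right (Nat.not_even_iff_odd.mpr hodd)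
    obtain ⟨j, hj⟩ : Even (m - 1 - d) := by
      rw [Nat.even_iff] at hm ⊢; rw [Nat.odd_iff] at hodd; omega
    obtain ⟨G, _, hG⟩ := exists_isRegularOfDegree_two_mul (m := m) (j := j) (by omega)
    refine ⟨Gᶜ, inferInstance, ?_⟩
    simpa only [ZMod.card, show m - 1 - 2 * j = d by omega] using hG.compl

end SimpleGraph

open SimpleGraph

theorem isGraphicList_of_equiv {V : Type*} [Fintype V] (G : SimpleGraph V) [DecidableRel G.Adj]
    {l : List ℕ} (e : V ≃ Fin l.length) (h : ∀ v, G.degree v = l.get (e v)) :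
    IsGraphicList l := by
  classical
  refine ⟨G.map e, inferInstance, fun i => ?_⟩
  obtain ⟨v, rfl⟩ := e.surjective i
  rw [← h, ← (Iso.map e G).degree_eq v]
  rfl

theorem isGraphicList_replicate_append_replicate {V W : Type*} [Fintype V] [Fintype W]
    (G : SimpleGraph (V ⊕ W)) [DecidableRel G.Adj] {a b : ℕ}
    (ha : ∀ v, G.degree (.inl v) = a) (hb : ∀ w, G.degree (.inr w) = b) :
    IsGraphicList (List.replicate (Fintype.card V) a ++ List.replicate (Fintype.card W) b) := by
  refine isGraphicList_of_equiv G ((Equiv.sumCongr (Fintype.equivFin V)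
    (Fintype.equivFin W)).trans (finSumFinEquiv.trans (finCongr (by simp)))) ?_
  rintro (v | w)
  · simp [ha, List.getElem_append_left]
  · simp [hb, List.getElem_append_right]

theorem seq_k2_minus_graphic_general {n x : ℕ} (hx4 : 4 ≤ x) (hxn : x ≤ n - 3)
    (hpar : Even ((n - 4) * x)) :
    IsGraphicList ([n - 3, n - 3] ++ List.replicate (n - 4) (x - 2)) := by
  have : NeZero (n - 4) := ⟨by omega⟩
  have hpar' : Even ((n - 4) * (x - 4)) := Nat.even_mul.mpr <|
    (Nat.even_mul.mp hpar).imp_right fun hx => (Nat.even_sub hx4).mpr (iff_of_true hx (by decide))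
  obtain ⟨H, _, hH⟩ := exists_isRegularOfDegree (m := n - 4) (d := x - 4) (by omega) hpar'
  classical
  have hcard : Fintype.card (Fin 2 ⊕ ZMod (n - 4)) = n - 2 := by
    rw [Fintype.card_sum, Fintype.card_fin, ZMod.card]
    omega
  have hG := isGraphicList_replicate_append_replicate ((⊥ : SimpleGraph (Fin 2)) ⊕g Hᶜ)ᶜ
    (a := n - 3) (b := x - 2)
    (fun v => by rw [degree_compl, degree_sum_inl, hcard, bot_degree]; omega)
    (fun w => by
      rw [degree_compl, degree_sum_inr, degree_compl, hH.degree_eq, hcard, ZMod.card]; omega)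
  simpa only [Fintype.card_fin, ZMod.card, List.reduceReplicate] using hG

/-- For `n ≥ 7` and `4 ≤ x ≤ n-3` with `(n-4)·x` even, the sequence
`(n-3, n-3, x-2, …, x-2)` of length `n-2` (with `n-4` copies of `x-2`) is graphic. -/
theorem seq_k2_minus_graphic {n x : ℕ} (hn : 7 ≤ n) (hx4 : 4 ≤ x) (hxn : x ≤ n - 3)
    (hpar : Even ((n - 4) * x)) :
    IsGraphicList ([n - 3, n - 3] ++ List.replicate (n - 4) (x - 2)) :=
  seq_k2_minus_graphic_general hx4 hxn hpar
end

section
/- If d = ⟨d₁,…,dₙ⟩ and d - k = ⟨d₁-k,…,dₙ-k⟩ are both graphic sequences, then the sequences ⟨d₁-k,…,dₙ-k⟩ and the constant sequence ⟨k,k,…,k⟩ pack, i.e., there exist edge-disjoint realizations of the two sequences on the same n vertices whose union realizes d with the constant part forming a k-factor. -/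
open Finset

namespace SimpleGraph

variable {V : Type*} {G H : SimpleGraph V}

variable (G) in
def twoSwitch (a b c d : V) : SimpleGraph V :=
  G \ (edge a b ⊔ edge c d) ⊔ (edge a c ⊔ edge b d)

instance [DecidableEq V] [DecidableRel G.Adj] (a b c d : V) :
    DecidableRel (G.twoSwitch a b c d).Adj :=
  inferInstanceAs <| DecidableRel (G \ (edge a b ⊔ edge c d) ⊔ (edge a c ⊔ edge b d)).Adj

theorem twoSwitch_adj {a b c d v w : V} : (G.twoSwitch a b c d).Adj v w ↔
    G.Adj v w ∧ ¬(edge a b ⊔ edge c d).Adj v w ∨ (edge a c ⊔ edge b d).Adj v w := Iff.rfl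

theorem twoSwitch_comm_left (a b c d : V) : G.twoSwitch a b c d = G.twoSwitch b a d c := by
  rw [twoSwitch, twoSwitch, edge_comm b a, edge_comm d c, sup_comm (edge b d)]

theorem twoSwitch_comm_right (a b c d : V) : G.twoSwitch a b c d = G.twoSwitch c d a b := by
  rw [twoSwitch, twoSwitch, edge_comm c a, edge_comm d b, sup_comm (edge c d)]

theorem twoSwitch_sdiff_lt_sdiff {a b c d : V} (hab : (H \ G).Adj a b) (hbc : b ≠ c)
    (had : a ≠ d) (hac : G.Adj a c) (hbd : G.Adj b d) : H.twoSwitch a b c d \ G < H \ G := by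
  refine lt_of_le_not_ge (fun x y hxy => ?_) (fun hle => ?_)
  · simp only [sdiff_adj, twoSwitch_adj, sup_adj, edge_adj] at hxy ⊢
    grind [hac.symm, hbd.symm]
  · have := hle hab
    simp only [sdiff_adj, twoSwitch_adj, sup_adj, edge_adj] at this
    grind [hab.ne]

theorem sdiff_twoSwitch_lt_sdiff {a b c d : V} (hbd : (H \ G).Adj b d) (hab : ¬H.Adj a b)
    (hcd : ¬H.Adj c d) : H \ G.twoSwitch a b c d < H \ G := by
  refine lt_of_le_not_ge (fun x y hxy => ?_) (fun hle => ?_)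
  · simp only [sdiff_adj, twoSwitch_adj, sup_adj, edge_adj] at hxy ⊢
    grind [H.adj_comm a b, H.adj_comm c d]
  · have := hle hbd
    simp only [sdiff_adj, twoSwitch_adj, sup_adj, edge_adj] at this
    grind [hbd.ne]

section Degree

variable [Fintype V] [DecidableEq V] [DecidableRel G.Adj] [DecidableRel H.Adj]

theorem neighborFinset_twoSwitch_left {a b c d : V} (hab : a ≠ b) (hac : a ≠ c)
    (had : a ≠ d) :
    (G.twoSwitch a b c d).neighborFinset a = insert c ((G.neighborFinset a).erase b) := by
  ext z
  simp only [mem_neighborFinset, mem_insert, mem_erase, twoSwitch_adj, sup_adj, edge_adj]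
  grind [G.ne_of_adj]

theorem neighborFinset_twoSwitch_of_ne {a b c d v : V}
    (ha : v ≠ a) (hb : v ≠ b) (hc : v ≠ c) (hd : v ≠ d) :
    (G.twoSwitch a b c d).neighborFinset v = G.neighborFinset v := by
  ext z
  simp only [mem_neighborFinset, twoSwitch_adj, sup_adj, edge_adj]
  grind

theorem degree_twoSwitch_left {a b c d : V} (hab : G.Adj a b) (hac : ¬G.Adj a c) (hac' : a ≠ c)
    (had : a ≠ d) : (G.twoSwitch a b c d).degree a = G.degree a := by
  rw [← card_neighborFinset_eq_degree, ← card_neighborFinset_eq_degree,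
    neighborFinset_twoSwitch_left hab.ne hac' had,
    card_insert_of_notMem (by simp [hac]), card_erase_add_one (by simpa using hab)]

theorem degree_twoSwitch {a b c d : V} (hab : G.Adj a b) (hcd : G.Adj c d)
    (hac : ¬G.Adj a c) (hbd : ¬G.Adj b d) (hac' : a ≠ c) (hbd' : b ≠ d) (v : V) :
    (G.twoSwitch a b c d).degree v = G.degree v := by
  have had : a ≠ d := by rintro rfl; exact hac hcd.symm
  have hbc : b ≠ c := by rintro rfl; exact hbd hcd
  by_cases hva : v = a
  · rw [hva]
    exact degree_twoSwitch_left hab hac hac' had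
  by_cases hvb : v = b
  · rw [hvb]
    convert degree_twoSwitch_left hab.symm hbd hbd' hbc using 2
    exact twoSwitch_comm_left a b c d
  by_cases hvc : v = c
  · rw [hvc]
    convert degree_twoSwitch_left hcd (fun h => hac h.symm) hac'.symm hbc.symm using 2
    exact twoSwitch_comm_right a b c d
  by_cases hvd : v = d
  · rw [hvd]
    convert degree_twoSwitch_left hcd.symm (fun h => hbd h.symm) hbd'.symm had.symm using 2
    exact (twoSwitch_comm_right a b c d).trans (twoSwitch_comm_left c d a b)
  rw [← card_neighborFinset_eq_degree, ← card_neighborFinset_eq_degree,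
    neighborFinset_twoSwitch_of_ne hva hvb hvc hvd]

variable (G H) in
theorem degree_sdiff_add_degree (v : V) :
    (G \ H).degree v + H.degree v = (H \ G).degree v + G.degree v := by
  simp only [← card_neighborFinset_eq_degree, neighborFinset_sdiff]
  have hG := card_sdiff_add_card_inter (G.neighborFinset v) (H.neighborFinset v)
  have hH := card_sdiff_add_card_inter (H.neighborFinset v) (G.neighborFinset v)
  rw [inter_comm] at hH
  omega

theorem degree_sdiff_add_degree_of_le (h : H ≤ G) (v : V) :
    (G \ H).degree v + H.degree v = G.degree v := by
  simpa [sdiff_eq_bot_iff.2 h] using degree_sdiff_add_degree G H v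

theorem degree_lt_degree_of_forall_adj {u v w : V}
    (h : ∀ z, G.Adj u z → z ≠ w → G.Adj w z) (hwv : G.Adj w v) (huv : ¬G.Adj u v)
    (hvu : v ≠ u) : G.degree u < G.degree w := by
  let s := (G.neighborFinset u).map (Equiv.swap u w).toEmbedding
  have hv : v ∉ s := by
    rw [mem_map_equiv, Equiv.symm_swap, Equiv.swap_apply_of_ne_of_ne hvu hwv.ne',
      mem_neighborFinset]
    exact huv
  have hs : insert v s ⊆ G.neighborFinset w := by
    intro y hy
    rw [mem_insert, mem_map_equiv, Equiv.symm_swap] at hy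
    rw [mem_neighborFinset]
    rcases hy with rfl | hy
    · exact hwv
    rw [Equiv.swap_apply_def, mem_neighborFinset] at hy
    split_ifs at hy with hyu hyw
    · exact hyu ▸ hy.symm
    · exact absurd hy (G.loopless.irrefl u)
    · exact h y hy hyw
  simpa [← card_neighborFinset_eq_degree, card_insert_of_notMem hv, s] using card_le_card hs

variable {k : ℕ}

theorem exists_sdiff_lt_of_sdiff_ne_bot (hk : ∀ x, G.degree x = H.degree x + k)
    (hne : H \ G ≠ ⊥) :
    ∃ (G' H' : SimpleGraph V) (_ : DecidableRel G'.Adj) (_ : DecidableRel H'.Adj),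
      (∀ x, G'.degree x = G.degree x) ∧ (∀ x, H'.degree x = H.degree x) ∧
        H' \ G' < H \ G := by
  have hblue : ∀ x, (G \ H).degree x = (H \ G).degree x + k := fun x => by
    have := degree_sdiff_add_degree G H x
    have := hk x
    omega
  obtain ⟨x, y, hxy⟩ := ne_bot_iff_exists_adj.1 hne
  have : Nonempty V := ⟨x⟩
  obtain ⟨u, hu⟩ := Finite.exists_max fun x => (H \ G).degree x
  obtain ⟨v, huv⟩ := (degree_pos_iff_exists_adj _ u).1 <|
    ((degree_pos_iff_exists_adj _ x).2 ⟨y, hxy⟩).trans_le (hu x)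
  obtain ⟨w, hvw⟩ := (degree_pos_iff_exists_adj (G \ H) v).1 <| by
    have := (degree_pos_iff_exists_adj _ v).2 ⟨u, huv.symm⟩
    rw [hblue]
    omega
  obtain ⟨z, huz, hzw, hwz⟩ : ∃ z, (G \ H).Adj u z ∧ z ≠ w ∧ ¬(G \ H).Adj w z := by
    by_contra! h
    have hlt := degree_lt_degree_of_forall_adj h hvw.symm (fun h => huv.2 h.1) huv.ne'
    rw [hblue, hblue] at hlt
    exact absurd (hu w) (by omega)
  have huw : u ≠ w := by rintro rfl; exact huv.2 hvw.1.symm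
  have hvz : v ≠ z := by rintro rfl; exact huv.2 huz.1
  by_cases hGwz : G.Adj w z
  · have hHwz : H.Adj w z := by simpa [hGwz] using hwz
    exact ⟨G, H.twoSwitch v u w z, inferInstance, inferInstance, fun _ => rfl,
      degree_twoSwitch huv.1.symm hHwz hvw.2 huz.2 hvw.ne huz.ne,
      twoSwitch_sdiff_lt_sdiff huv.symm huw hvz hvw.1 huz.1⟩
  · exact ⟨G.twoSwitch w v z u, H, inferInstance, inferInstance,
      degree_twoSwitch hvw.1.symm huz.1.symm hGwz (fun h => huv.2 h.symm) hzw.symm huv.ne',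
      fun _ => rfl,
      sdiff_twoSwitch_lt_sdiff huv.symm (fun h => hvw.2 h.symm) (fun h => huz.2 h.symm)⟩

theorem exists_le_of_degree_eq_add (hk : ∀ x, G.degree x = H.degree x + k) :
    ∃ (G' H' : SimpleGraph V) (_ : DecidableRel G'.Adj) (_ : DecidableRel H'.Adj),
      H' ≤ G' ∧ (∀ x, G'.degree x = G.degree x) ∧ ∀ x, H'.degree x = H.degree x := by
  induction hR : H \ G using WellFoundedLT.induction generalizing G H with
  | _ R ih =>
    obtain rfl | hne := eq_or_ne R ⊥
    · exact ⟨G, H, _, _, sdiff_eq_bot_iff.1 hR, fun _ => rfl, fun _ => rfl⟩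
    obtain ⟨G', H', _, _, hG', hH', hlt⟩ := exists_sdiff_lt_of_sdiff_ne_bot hk (hR ▸ hne)
    obtain ⟨G'', H'', _, _, hle, hG'', hH''⟩ :=
      ih _ (hR ▸ hlt) (fun x => by rw [hG', hH', hk]) rfl
    exact ⟨G'', H'', _, _, hle, fun x => (hG'' x).trans (hG' x),
      fun x => (hH'' x).trans (hH' x)⟩

end Degree

end SimpleGraph

/-- Kundu's k-factor theorem: if `d` and `d - k` are both graphic, then `d - k` and the
constant sequence `k` pack: there are edge-disjoint graphs `A` realizing `d - k` and a
`k`-regular `B` on the same vertex set, whose union realizes `d`. -/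
theorem kundu_packing {n k : ℕ} (d : Fin n → ℕ) (hk : ∀ i, k ≤ d i)
    (hd : IsGraphicSeq d) (hdk : IsGraphicSeq (fun i => d i - k)) :
    ∃ (A B : SimpleGraph (Fin n)) (_ : DecidableRel A.Adj) (_ : DecidableRel B.Adj),
      Disjoint A B ∧ (∀ i, A.degree i = d i - k) ∧ B.IsRegularOfDegree k ∧
      ∀ i, (A ⊔ B).degree i = d i := by
  obtain ⟨G, _, hG⟩ := hd
  obtain ⟨H, _, hH⟩ := hdk
  beta_reduce at hH
  obtain ⟨G', H', _, _, hle, hG', hH'⟩ :=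
    SimpleGraph.exists_le_of_degree_eq_add (G := G) (H := H) (k := k) fun i => by
      rw [hG, hH, Nat.sub_add_cancel (hk i)]
  refine ⟨H', G' \ H', inferInstance, inferInstance, disjoint_sdiff_self_right,
    fun i => (hH' i).trans (hH i), fun i => ?_, fun i => ?_⟩
  · have := SimpleGraph.degree_sdiff_add_degree_of_le hle i
    rw [hG', hH', hG, hH] at this
    have := hk i
    omega
  · convert (hG' i).trans (hG i) using 2
    exact sup_sdiff_cancel_right hle
end
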